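/- arXiv:2511.00184 — 4 statements merged into one kernel-verified Lean document; each statement's English description precedes it below -/
import Mathlib

section
/- Suppose all n jobs can be scheduled on machines M with makespan at most T, and let m⋆ be the size of a maximum matching in the bipartite graph G_L of large edges (pairs (i,j) with T/2 < p(i,j) ≤ T). Then there exists a schedule using only small edges (pairs with p(i,j) ≤ T/2) that schedules at least n − m⋆ jobs with makespan at most T. -/
open Finset
open scoped Classical

/-- If all `n` jobs can be scheduled with makespan at most `T`, and `mstar` is the size of a
maximum matching in the bipartite graph of large edges (processing time in `(T/2, T]`), then
there is a schedule using only small edges (processing time at most `T/2`) that schedules at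
least `n - mstar` jobs with makespan at most `T`. -/
theorem stmt1 {M J : Type*} [Fintype M] [Fintype J]
    (p : M → J → ℝ) (hp : ∀ i j, 0 ≤ p i j) (T : ℝ) (hT : 0 < T)
    (f : J → M)
    (hf : ∀ i : M, ∑ j ∈ Finset.univ.filter (fun j => f j = i), p i j ≤ T)
    (mstar : ℕ)
    (hmax : ∀ O : Finset (M × J),
      (∀ e ∈ O, T / 2 < p e.1 e.2 ∧ p e.1 e.2 ≤ T) →
      (∀ i : M, (O.filter (fun e => e.1 = i)).card ≤ 1) →
      (∀ j : J, (O.filter (fun e => e.2 = j)).card ≤ 1) → O.card ≤ mstar)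
    (hach : ∃ O : Finset (M × J),
      (∀ e ∈ O, T / 2 < p e.1 e.2 ∧ p e.1 e.2 ≤ T) ∧
      (∀ i : M, (O.filter (fun e => e.1 = i)).card ≤ 1) ∧
      (∀ j : J, (O.filter (fun e => e.2 = j)).card ≤ 1) ∧ O.card = mstar) :
    ∃ (J' : Finset J) (g : J → M),
      Fintype.card J - mstar ≤ J'.card ∧
      (∀ j ∈ J', p (g j) j ≤ T / 2) ∧
      (∀ i : M, ∑ j ∈ J'.filter (fun j => g j = i), p i j ≤ T) := by
  classical
  set B : Finset J := Finset.univ.filter (fun j => T / 2 < p (f j) j) with hB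
  -- each job on its own machine has processing time ≤ T
  have hsingle : ∀ j : J, p (f j) j ≤ T := by
    intro j
    refine le_trans ?_ (hf (f j))
    exact Finset.single_le_sum (fun k _ => hp (f j) k)
      (by simp [Finset.mem_filter])
  set O : Finset (M × J) := B.image (fun j => (f j, j)) with hO
  have hinj : Set.InjOn (fun j => (f j, j)) B := by
    intro a _ b _ h
    exact congrArg Prod.snd h
  have hcardO : O.card = B.card := Finset.card_image_of_injOn hinj
  have hBcard : B.card ≤ mstar := by
    rw [← hcardO]
    refine hmax O ?_ ?_ ?_
    · intro e he
      rw [hO, Finset.mem_image] at he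
      obtain ⟨j, hj, rfl⟩ := he
      rw [hB, Finset.mem_filter] at hj
      exact ⟨hj.2, hsingle j⟩
    · intro i
      rw [Finset.card_le_one]
      intro a ha b hb
      rw [Finset.mem_filter, hO, Finset.mem_image] at ha hb
      obtain ⟨⟨j, hj, rfl⟩, hji⟩ := ha
      obtain ⟨⟨k, hk, rfl⟩, hki⟩ := hb
      simp only at hji hki
      rw [hB, Finset.mem_filter] at hj hk
      by_contra hne
      have hjk : j ≠ k := fun h => hne (by rw [h])
      have hsum : p i j + p i k ≤ ∑ l ∈ Finset.univ.filter (fun l => f l = i), p i l := by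
        have hsub : ({j, k} : Finset J) ⊆ Finset.univ.filter (fun l => f l = i) := by
          intro l hl
          simp only [Finset.mem_insert, Finset.mem_singleton] at hl
          rcases hl with rfl | rfl <;> simp [Finset.mem_filter, hji, hki]
        calc p i j + p i k = ∑ l ∈ ({j, k} : Finset J), p i l := (Finset.sum_pair hjk).symm
          _ ≤ _ := Finset.sum_le_sum_of_subset_of_nonneg hsub (fun l _ _ => hp i l)
      have hT2 : T < p i j + p i k := by
        have h1 : T / 2 < p i j := hji ▸ hj.2
        have h2 : T / 2 < p i k := hki ▸ hk.2
        linarith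
      have := hf i
      linarith
    · intro j
      rw [Finset.card_le_one]
      intro a ha b hb
      rw [Finset.mem_filter, hO, Finset.mem_image] at ha hb
      obtain ⟨⟨l, _, rfl⟩, hl⟩ := ha
      obtain ⟨⟨m, _, rfl⟩, hm⟩ := hb
      simp only at hl hm
      subst hl; subst hm; rfl
  refine ⟨Bᶜ, f, ?_, ?_, ?_⟩
  · have : Bᶜ.card = Fintype.card J - B.card := by
      rw [Finset.card_compl]
    omega
  · intro j hj
    rw [Finset.mem_compl, hB, Finset.mem_filter] at hj
    push_neg at hj
    exact hj (Finset.mem_univ j)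
  · intro i
    refine le_trans ?_ (hf i)
    refine Finset.sum_le_sum_of_subset_of_nonneg ?_ (fun l _ _ => hp i l)
    intro l hl
    rw [Finset.mem_filter] at hl ⊢
    exact ⟨Finset.mem_univ l, hl.2⟩
end

section
/- Let y : M × C → [0,1] be a fractional solution such that for every job j, the sum over machines i and configurations C containing j of y(i,C) equals 1. If each machine i independently samples one configuration C with probability y(i,C) and a job counts as scheduled if it appears in at least one sampled configuration, then the expected number of scheduled jobs is at least (1 − 1/e)·n, where n is the number of jobs. -/
open Finset
open scoped Classical

/-- Randomized rounding of the configuration LP: if each machine `i` independently samples a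
configuration `C` (a subset of jobs) with probability `y i C`, and every job has total
fractional coverage exactly `1`, then the expected number of jobs appearing in at least one
sampled configuration is at least `(1 - 1/e) * n`. -/
theorem stmt2 {M J : Type*} [Fintype M] [Fintype J] [DecidableEq J]
    (y : M → Finset J → ℝ) (hy0 : ∀ i C, 0 ≤ y i C)
    (hy1 : ∀ i : M, ∑ C : Finset J, y i C = 1)
    (hcov : ∀ j : J,
      ∑ i : M, ∑ C ∈ Finset.univ.filter (fun C : Finset J => j ∈ C), y i C = 1) :
    (1 - Real.exp (-1)) * (Fintype.card J : ℝ) ≤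
      ∑ ω : M → Finset J, (∏ i, y i (ω i)) *
        ((Finset.univ.filter (fun j : J => ∃ i, j ∈ ω i)).card : ℝ) := by
  classical
  set p : M → J → ℝ := fun i j =>
    ∑ C ∈ Finset.univ.filter (fun C : Finset J => j ∈ C), y i C with hp
  have hp0 : ∀ i j, 0 ≤ p i j := fun i j => Finset.sum_nonneg fun C _ => hy0 i C
  have hpsum : ∀ j, ∑ i : M, p i j = 1 := fun j => hcov j
  have hp1 : ∀ i j, p i j ≤ 1 := by
    intro i j
    calc p i j ≤ ∑ i : M, p i j :=
          Finset.single_le_sum (fun i _ => hp0 i j) (Finset.mem_univ i)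
      _ = 1 := hpsum j
  have hsum1 : ∑ ω : M → Finset J, (∏ i, y i (ω i)) = 1 := by
    rw [← Fintype.piFinset_univ, ← Finset.prod_univ_sum]
    simp [hy1]
  have hmiss : ∀ i j, ∑ C : Finset J, y i C * (if j ∈ C then 0 else 1) = 1 - p i j := by
    intro i j
    have h1 : ∀ C : Finset J, y i C * (if j ∈ C then (0:ℝ) else 1)
        = y i C - (if j ∈ C then y i C else 0) := by
      intro C; split <;> ring
    rw [Finset.sum_congr rfl fun C _ => h1 C, Finset.sum_sub_distrib, hy1,
      ← Finset.sum_filter]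
  have hnot : ∀ j, ∑ ω : M → Finset J, ∏ i, (y i (ω i) * (if j ∈ ω i then 0 else 1))
      = ∏ i, (1 - p i j) := by
    intro j
    have h := Finset.prod_univ_sum (fun _ : M => (univ : Finset (Finset J)))
      (fun i C => y i C * if j ∈ C then (0:ℝ) else 1)
    rw [← Fintype.piFinset_univ, ← h]
    exact Finset.prod_congr rfl fun i _ => hmiss i j
  have key : ∀ j : J, 1 - Real.exp (-1) ≤
      ∑ ω : M → Finset J, (∏ i, y i (ω i)) * (if ∃ i, j ∈ ω i then (1:ℝ) else 0) := by
    intro j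
    have hid : ∀ ω : M → Finset J, (∏ i, y i (ω i)) * (if ∃ i, j ∈ ω i then (1:ℝ) else 0)
        = (∏ i, y i (ω i)) - ∏ i, (y i (ω i) * (if j ∈ ω i then 0 else 1)) := by
      intro ω
      by_cases h : ∃ i, j ∈ ω i
      · obtain ⟨i0, hi0⟩ := h
        rw [if_pos ⟨i0, hi0⟩]
        have hz : ∏ i, (y i (ω i) * (if j ∈ ω i then (0:ℝ) else 1)) = 0 :=
          Finset.prod_eq_zero (Finset.mem_univ i0) (by simp [hi0])
        rw [hz]; ring
      · rw [if_neg h]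
        push_neg at h
        have he : ∏ i, (y i (ω i) * (if j ∈ ω i then (0:ℝ) else 1)) = ∏ i, y i (ω i) :=
          Finset.prod_congr rfl fun i _ => by simp [h i]
        rw [he]; ring
    have hprod : ∏ i, (1 - p i j) ≤ Real.exp (-1) := by
      calc ∏ i, (1 - p i j) ≤ ∏ i, Real.exp (-(p i j)) :=
            Finset.prod_le_prod (fun i _ => by linarith [hp1 i j])
              (fun i _ => by linarith [Real.add_one_le_exp (-(p i j))])
        _ = Real.exp (∑ i, -(p i j)) := (Real.exp_sum _ _).symm
        _ = Real.exp (-1) := by rw [Finset.sum_neg_distrib, hpsum j]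
    calc 1 - Real.exp (-1) ≤ 1 - ∏ i, (1 - p i j) := by linarith
      _ = ∑ ω : M → Finset J, ((∏ i, y i (ω i))
            - ∏ i, (y i (ω i) * (if j ∈ ω i then 0 else 1))) := by
          rw [Finset.sum_sub_distrib, hsum1, hnot j]
      _ = _ := (Finset.sum_congr rfl fun ω _ => (hid ω).symm)
  calc (1 - Real.exp (-1)) * (Fintype.card J : ℝ)
      = ∑ _j : J, (1 - Real.exp (-1)) := by
        rw [Finset.sum_const, Finset.card_univ, nsmul_eq_mul, mul_comm]
    _ ≤ ∑ j : J, ∑ ω : M → Finset J,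
          (∏ i, y i (ω i)) * (if ∃ i, j ∈ ω i then (1:ℝ) else 0) :=
        Finset.sum_le_sum fun j _ => key j
    _ = _ := by
        rw [Finset.sum_comm]
        refine Finset.sum_congr rfl fun ω _ => ?_
        rw [← Finset.mul_sum]
        congr 1
        rw [Finset.card_filter]
        push_cast
        exact Finset.sum_congr rfl fun j _ => by split <;> simp
end

section
/- For n ∈ ℝ≥0, define f(x) = max(x, (1/6)(n − x) + (1 − 1/e)(n − (1/6)(n − x))) for x ∈ [0, n]. Then the minimum of f over [0, n] is attained at x = n·(6e − 5)/(6e + 1), and f(x) ≥ n·(6e − 5)/(6e + 1) > 0.6533·n for all x ∈ [0, n]. In particular (6e−5)/(6e+1) > 1 − 1/e + 0.02. -/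
/-- Trade-off analysis for the bicriteria Makespan algorithm. For
`f x = max (x, (1/6)(n - x) + (1 - 1/e)(n - (1/6)(n - x)))` on `[0, n]`:
the minimum of `f` is attained at `x = n (6e-5)/(6e+1)`, where it equals `n (6e-5)/(6e+1)`;
moreover `(6e-5)/(6e+1) > 0.6533` and `(6e-5)/(6e+1) > 1 - 1/e + 0.02`. -/
theorem stmt6 (n : ℝ) (hn : 0 ≤ n) :
    (∀ x ∈ Set.Icc (0 : ℝ) n,
      n * ((6 * Real.exp 1 - 5) / (6 * Real.exp 1 + 1)) ≤
        max x ((1 / 6) * (n - x) +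
          (1 - 1 / Real.exp 1) * (n - (1 / 6) * (n - x)))) ∧
    (max (n * ((6 * Real.exp 1 - 5) / (6 * Real.exp 1 + 1)))
        ((1 / 6) * (n - n * ((6 * Real.exp 1 - 5) / (6 * Real.exp 1 + 1))) +
          (1 - 1 / Real.exp 1) *
            (n - (1 / 6) * (n - n * ((6 * Real.exp 1 - 5) / (6 * Real.exp 1 + 1)))))
      = n * ((6 * Real.exp 1 - 5) / (6 * Real.exp 1 + 1))) ∧
    (0.6533 < (6 * Real.exp 1 - 5) / (6 * Real.exp 1 + 1)) ∧
    (1 - 1 / Real.exp 1 + 0.02 < (6 * Real.exp 1 - 5) / (6 * Real.exp 1 + 1)) := by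
  have he : (0:ℝ) < Real.exp 1 := Real.exp_pos 1
  have heg : (2.7182818283 : ℝ) < Real.exp 1 := Real.exp_one_gt_d9
  have hel : Real.exp 1 < 2.7182818286 := Real.exp_one_lt_d9
  set e := Real.exp 1 with hedef
  have hb : (0:ℝ) < 6 * e + 1 := by linarith
  have hkey : (1 / 6) * (n - n * ((6 * e - 5) / (6 * e + 1))) +
      (1 - 1 / e) * (n - (1 / 6) * (n - n * ((6 * e - 5) / (6 * e + 1))))
      = n * ((6 * e - 5) / (6 * e + 1)) := by
    field_simp
    ring
  refine ⟨?_, ?_, ?_, ?_⟩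
  · intro x hx
    obtain ⟨hx0, hxn⟩ := hx
    rcases le_or_gt (n * ((6 * e - 5) / (6 * e + 1))) x with h | h
    · exact le_max_of_le_left h
    · refine le_max_of_le_right ?_
      rw [← hkey]
      have h1 : (0:ℝ) < 1 / (6 * e) := by positivity
      have : (1 / 6) * (n - x) + (1 - 1 / e) * (n - (1 / 6) * (n - x))
          - ((1 / 6) * (n - n * ((6 * e - 5) / (6 * e + 1))) +
            (1 - 1 / e) * (n - (1 / 6) * (n - n * ((6 * e - 5) / (6 * e + 1)))))
          = (n * ((6 * e - 5) / (6 * e + 1)) - x) * (1 / (6 * e)) := by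
        field_simp
        ring
      nlinarith [mul_pos (sub_pos.mpr h) h1]
  · rw [hkey, max_self]
  · rw [lt_div_iff₀ hb]; nlinarith
  · have h2 : (1:ℝ) - 1 / e + 0.02 = (1.02 * e - 1) / e := by
      field_simp; ring
    rw [h2, div_lt_div_iff₀ he hb]
    nlinarith
end

section
/- Suppose in a bicriteria Santa Claus instance constructed from a Set Packing instance with n sets and a universe U, there are n agents (one per set S_i), |U| normal items, and (1−α)·n dummy items; agent i values normal item j at T/|S_i| if j ∈ S_i and 0 otherwise, and values every dummy item at T. If there is an allocation in which at least (1−α+β)·n agents each receive total value at least (1−ε)·T, then at least β·n agents receive value at least (1−ε)·T using only normal items, and for each such agent i the allocated normal items correspond to at least (1−ε)·|S_i| elements of S_i, with these element sets pairwise disjoint across agents; i.e., the corresponding sets S_i are ε-almost disjoint. -/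
open Finset
open scoped Classical

/-- Soundness of the Set Packing → Santa Claus reduction. There are `n` agents (one per set
`S i`), normal items (elements of the universe `α`) valued `T/|S i|` by agent `i` if they
lie in `S i` (and 0 otherwise), and `Dn = (1-a)·n` dummy items each valued `T`. If an
allocation gives at least `(1-a+b)·n` agents value at least `(1-ε)T`, then at least `b·n`
agents obtain value at least `(1-ε)T` from normal items only; each such agent `i` receives
at least `(1-ε)|S i|` elements of `S i`, and these element sets are pairwise disjoint, i.e.,
the corresponding sets `S i` are ε-almost disjoint. -/
theorem stmt15 {α : Type*} [Fintype α]
    (n Dn : ℕ) (a b ε T : ℝ)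
    (ha0 : 0 < a) (ha1 : a < 1) (hb0 : 0 < b) (hab : b < a)
    (hε0 : 0 < ε) (hε1 : ε < 1) (hT : 0 < T)
    (S : Fin n → Finset α) (hS : ∀ i, (S i).Nonempty)
    (hD : (Dn : ℝ) = (1 - a) * n)
    (alloc : α ⊕ Fin Dn → Option (Fin n))
    (value : Fin n → ℝ)
    (hvalue : ∀ i, value i =
      (∑ j ∈ Finset.univ.filter
          (fun j : α => alloc (Sum.inl j) = some i ∧ j ∈ S i), T / ((S i).card : ℝ)) +
      (∑ _d ∈ Finset.univ.filter
          (fun d : Fin Dn => alloc (Sum.inr d) = some i), T))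
    (hmany : (1 - a + b) * n ≤
      ((Finset.univ.filter (fun i : Fin n => (1 - ε) * T ≤ value i)).card : ℝ)) :
    ∃ G : Finset (Fin n), b * n ≤ (G.card : ℝ) ∧
      ∃ A : Fin n → Finset α,
        (∀ i ∈ G, A i ⊆ S i ∧
          (1 - ε) * ((S i).card : ℝ) ≤ ((A i).card : ℝ) ∧
          (∀ j ∈ A i, alloc (Sum.inl j) = some i) ∧
          (1 - ε) * T ≤ ∑ _j ∈ A i, T / ((S i).card : ℝ)) ∧
        (∀ i ∈ G, ∀ i' ∈ G, i ≠ i' → Disjoint (A i) (A i')) := by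
  set W := Finset.univ.filter (fun i : Fin n => (1 - ε) * T ≤ value i) with hW
  set B := Finset.univ.filter (fun i : Fin n => ∃ d, alloc (Sum.inr d) = some i) with hB
  -- card B ≤ Dn
  have hBcard : B.card ≤ Dn := by
    have hsub : B.image (fun i => some i) ⊆
        (Finset.univ : Finset (Fin Dn)).image (fun d => alloc (Sum.inr d)) := by
      intro x hx
      obtain ⟨i, hi, rfl⟩ := Finset.mem_image.mp hx
      obtain ⟨d, hd⟩ : ∃ d, alloc (Sum.inr d) = some i := by simpa [hB] using hi
      exact Finset.mem_image.mpr ⟨d, Finset.mem_univ _, hd⟩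
    have h1 : B.card = (B.image (fun i => some i)).card :=
      (Finset.card_image_of_injective _ (Option.some_injective _)).symm
    calc B.card = (B.image (fun i => some i)).card := h1
      _ ≤ ((Finset.univ : Finset (Fin Dn)).image (fun d => alloc (Sum.inr d))).card :=
          Finset.card_le_card hsub
      _ ≤ (Finset.univ : Finset (Fin Dn)).card := Finset.card_image_le
      _ = Dn := by simp
  refine ⟨W \ B, ?_, fun i => Finset.univ.filter
      (fun j : α => alloc (Sum.inl j) = some i ∧ j ∈ S i), ?_, ?_⟩
  · have h2 : W.card ≤ (W \ B).card + B.card := Finset.card_le_card_sdiff_add_card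
    have h2' : (W.card : ℝ) ≤ ((W \ B).card : ℝ) + (B.card : ℝ) := by exact_mod_cast h2
    have hBle : (B.card : ℝ) ≤ (1 - a) * n := by
      rw [← hD]; exact_mod_cast hBcard
    linarith
  · intro i hi
    have hiW : i ∈ W := (Finset.mem_sdiff.mp hi).1
    have hiB : i ∉ B := (Finset.mem_sdiff.mp hi).2
    have hnod : ∀ d : Fin Dn, ¬ alloc (Sum.inr d) = some i := by
      intro d hd
      exact hiB (by simp only [hB, Finset.mem_filter, Finset.mem_univ, true_and]; exact ⟨d, hd⟩)
    have hval : (1 - ε) * T ≤ value i := by simpa [hW] using hiW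
    have hdz : (Finset.univ.filter (fun d : Fin Dn => alloc (Sum.inr d) = some i)) = ∅ := by
      apply Finset.filter_false_of_mem
      intro d _
      exact hnod d
    have hval2 : (1 - ε) * T ≤
        ∑ j ∈ Finset.univ.filter
          (fun j : α => alloc (Sum.inl j) = some i ∧ j ∈ S i), T / ((S i).card : ℝ) := by
      have hv := hvalue i
      rw [hdz] at hv
      simp only [Finset.sum_empty, add_zero] at hv
      linarith [hval, hv.le, hv.ge]
    set Ai := Finset.univ.filter (fun j : α => alloc (Sum.inl j) = some i ∧ j ∈ S i) with hAi
    have hsum : ∑ _j ∈ Ai, T / ((S i).card : ℝ) = (Ai.card : ℝ) * (T / ((S i).card : ℝ)) := by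
      rw [Finset.sum_const, nsmul_eq_mul]
    have hScard : (0 : ℝ) < ((S i).card : ℝ) := by
      exact_mod_cast Finset.card_pos.mpr (hS i)
    refine ⟨?_, ?_, ?_, hval2⟩
    · intro j hj
      exact (Finset.mem_filter.mp hj).2.2
    · have hle : (1 - ε) * T ≤ (Ai.card : ℝ) * (T / ((S i).card : ℝ)) := by
        rw [← hsum]; exact hval2
      have h3 : (1 - ε) * T * ((S i).card : ℝ) ≤ (Ai.card : ℝ) * T := by
        have h4 := mul_le_mul_of_nonneg_right hle hScard.le
        rw [mul_assoc ((Ai.card : ℝ)), div_mul_cancel₀ _ hScard.ne'] at h4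
        linarith
      nlinarith [h3, hT]
    · intro j hj
      exact (Finset.mem_filter.mp hj).2.1
  · intro i hi i' hi' hne
    rw [Finset.disjoint_left]
    intro j hj hj'
    have h1 := (Finset.mem_filter.mp hj).2.1
    have h2 := (Finset.mem_filter.mp hj').2.1
    rw [h1] at h2
    exact hne (Option.some_inj.mp h2)
end
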